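/- arXiv:1211.1858 — 2 statements merged into one kernel-verified Lean document; each statement's English description precedes it below -/
import Mathlib

section
/- Assume D = 0 and Re(λ_i) < 0 for all i = 1,…,n (the system is asymptotically stable and strictly proper). Then for every ω > 0, ‖H‖²_{H2,ω} = Σ_{i=1}^n Σ_{k=1}^n (2/π)·tr(φ_i·φ_kᵀ/(λ_i+λ_k))·atan(ω/λ_i). -/
open Complex Matrix MeasureTheory intervalIntegral BigOperators

/-- Strictly proper transfer function `H(s) = Σᵢ (s − λᵢ)⁻¹ • φᵢ`. -/
noncomputable def transferH {n n_u n_y : ℕ} (lam : Fin n → ℂ)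
    (φ : Fin n → Matrix (Fin n_y) (Fin n_u) ℂ) (s : ℂ) : Matrix (Fin n_y) (Fin n_u) ℂ :=
  ∑ i, (s - lam i)⁻¹ • φ i

/-- Squared frequency-limited H2-norm:
`‖H‖²_{H2,ω} = (1/(2π)) ∫_{−ω}^{ω} tr(H(iν)·H(−iν)ᵀ) dν`. -/
noncomputable def h2wSq {n n_u n_y : ℕ} (lam : Fin n → ℂ)
    (φ : Fin n → Matrix (Fin n_y) (Fin n_u) ℂ) (ω : ℝ) : ℂ :=
  (2 * (Real.pi : ℂ))⁻¹ * ∫ ν : ℝ in (-ω)..ω,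
    (transferH lam φ (Complex.I * (ν : ℂ)) *
      (transferH lam φ (-(Complex.I * (ν : ℂ))))ᵀ).trace

/-- Principal complex arctangent: `atan z = (1/(2i))·(log(1+iz) − log(1−iz))`,
where `log` is the principal branch of the complex logarithm. -/
noncomputable def catan (z : ℂ) : ℂ :=
  (2 * Complex.I)⁻¹ * (Complex.log (1 + Complex.I * z) - Complex.log (1 - Complex.I * z))

/-!
Expanding the trace, `tr(H(iν) H(−iν)ᵀ)` is a double sum of `tr(φᵢ φₖᵀ)` times
`(iν − λᵢ)⁻¹ (−iν − λₖ)⁻¹`. Because `Re λ < 0`, both factors stay in the right half-plane,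
where the principal logarithm is holomorphic, and `(λᵢ + λₖ)⁻¹ · i · (log(iν − λᵢ) − log(−iν − λₖ))`
is an antiderivative. Between `−ω` and `ω` the logarithms recombine into
`2 (λᵢ + λₖ)⁻¹ (atan(ω/λᵢ) + atan(ω/λₖ))`, and the symmetry of `tr(φᵢ φₖᵀ)/(λᵢ + λₖ)`
in `i, k` turns the sum of the two arctangents into twice the first.
-/

namespace Complex

lemma log_div_of_re_pos {u b : ℂ} (hu : 0 < u.re) (hb : 0 < b.re) :
    log (u / b) = log u - log b := by
  have hu0 : u ≠ 0 := fun h => by simp [h] at hu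
  have hb0 : b ≠ 0 := fun h => by simp [h] at hb
  obtain ⟨hu₁, hu₂⟩ := abs_lt.mp (abs_arg_lt_pi_div_two_iff.mpr (Or.inl hu))
  obtain ⟨hb₁, hb₂⟩ := abs_lt.mp (abs_arg_lt_pi_div_two_iff.mpr (Or.inl hb))
  have hbπ : arg b ≠ Real.pi := by linarith [Real.pi_pos]
  rw [div_eq_mul_inv, log_mul hu0 (inv_ne_zero hb0), log_inv b hbπ, ← sub_eq_add_neg]
  rw [arg_inv, if_neg hbπ]
  constructor <;> linarith [Real.pi_pos]

lemma I_mul_ofReal_sub_re_pos {μ : ℂ} (hμ : μ.re < 0) (ν : ℝ) : 0 < (I * ν - μ).re := by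
  simpa using hμ

lemma neg_I_mul_ofReal_sub_re_pos {μ : ℂ} (hμ : μ.re < 0) (ν : ℝ) :
    0 < (-(I * ν) - μ).re := by
  simpa using hμ

lemma catan_ofReal_div_eq {l : ℂ} (hl : l.re < 0) (ω : ℝ) :
    catan (ω / l) = (I / 2) * (log (I * ω - l) - log (-(I * ω) - l)) := by
  have hl0 : l ≠ 0 := fun h => by simp [h] at hl
  have h₁ : 1 + I * (ω / l) = (-(I * ω) - l) / (-l) := by field_simp; ring
  have h₂ : 1 - I * (ω / l) = (I * ω - l) / (-l) := by field_simp; ring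
  have hnl : 0 < (-l).re := by simpa using hl
  rw [catan, h₁, h₂, log_div_of_re_pos (neg_I_mul_ofReal_sub_re_pos hl ω) hnl,
    log_div_of_re_pos (I_mul_ofReal_sub_re_pos hl ω) hnl, mul_inv, inv_I]
  ring

lemma continuous_resolvent_mul_resolvent {μ κ : ℂ} (hμ : μ.re < 0) (hκ : κ.re < 0) :
    Continuous fun ν : ℝ => (I * ν - μ)⁻¹ * (-(I * ν) - κ)⁻¹ := by
  refine ((by fun_prop : Continuous fun ν : ℝ => I * ν - μ).inv₀ fun ν h => ?_).mul
    ((by fun_prop : Continuous fun ν : ℝ => -(I * ν) - κ).inv₀ fun ν h => ?_)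
  · simpa [h] using I_mul_ofReal_sub_re_pos hμ ν
  · simpa [h] using neg_I_mul_ofReal_sub_re_pos hκ ν

lemma hasDerivAt_resolvent_log {μ κ : ℂ} (hμ : μ.re < 0) (hκ : κ.re < 0) (ν : ℝ) :
    HasDerivAt (fun t : ℝ => I * (μ + κ)⁻¹ * (log (I * t - μ) - log (-(I * t) - κ)))
      ((I * ν - μ)⁻¹ * (-(I * ν) - κ)⁻¹) ν := by
  have hμκ : μ + κ ≠ 0 := fun h => by
    have := congrArg re h
    simp only [add_re, zero_re] at this
    linarith
  have h₁ := I_mul_ofReal_sub_re_pos hμ ν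
  have h₂ := neg_I_mul_ofReal_sub_re_pos hκ ν
  have h₁0 : I * ν - μ ≠ 0 := fun h => by simp [h] at h₁
  have h₂0 : -(I * ν) - κ ≠ 0 := fun h => by simp [h] at h₂
  have hlin₁ : HasDerivAt (fun t : ℝ => I * t - μ) I ν := by
    simpa using ((ofRealCLM.hasDerivAt (x := ν)).const_mul I).sub_const μ
  have hlin₂ : HasDerivAt (fun t : ℝ => -(I * t) - κ) (-I) ν := by
    simpa using ((ofRealCLM.hasDerivAt (x := ν)).const_mul I).neg.sub_const κ
  have hlog₁ := (hasDerivAt_log (mem_slitPlane_iff.mpr (Or.inl h₁))).comp ν hlin₁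
  have hlog₂ := (hasDerivAt_log (mem_slitPlane_iff.mpr (Or.inl h₂))).comp ν hlin₂
  refine ((hlog₁.sub hlog₂).const_mul (I * (μ + κ)⁻¹)).congr_deriv ?_
  field_simp
  linear_combination (I * ν - μ + (-(I * ν) - κ)) * I_sq

lemma integral_resolvent_mul_resolvent {μ κ : ℂ} (hμ : μ.re < 0) (hκ : κ.re < 0) (ω : ℝ) :
    ∫ ν : ℝ in (-ω)..ω, (I * ν - μ)⁻¹ * (-(I * ν) - κ)⁻¹
      = 2 * (μ + κ)⁻¹ * (catan (ω / μ) + catan (ω / κ)) := by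
  rw [integral_eq_sub_of_hasDerivAt (fun ν _ => hasDerivAt_resolvent_log hμ hκ ν)
    ((continuous_resolvent_mul_resolvent hμ hκ).intervalIntegrable _ _),
    catan_ofReal_div_eq hμ, catan_ofReal_div_eq hκ]
  push_cast
  ring_nf

end Complex

lemma Matrix.trace_mul_transpose_comm {m n R : Type*} [Fintype m] [Fintype n] [CommSemiring R]
    (A B : Matrix m n R) : (A * Bᵀ).trace = (B * Aᵀ).trace := by
  rw [← trace_transpose, transpose_mul, transpose_transpose]

lemma Finset.sum_sum_mul_add_of_symm {ι R : Type*} [Fintype ι] [CommSemiring R]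
    {w : ι → ι → R} (hw : ∀ i k, w i k = w k i) (a : ι → R) :
    ∑ i, ∑ k, w i k * (a i + a k) = 2 * ∑ i, ∑ k, w i k * a i := by
  have hswap : ∑ i, ∑ k, w i k * a k = ∑ i, ∑ k, w i k * a i := by
    rw [Finset.sum_comm]
    simp only [hw]
  simp only [mul_add, Finset.sum_add_distrib, hswap]
  ring

lemma trace_transferH_mul_transpose {n n_u n_y : ℕ} (lam : Fin n → ℂ)
    (φ : Fin n → Matrix (Fin n_y) (Fin n_u) ℂ) (ν : ℝ) :
    (transferH lam φ (I * ν) * (transferH lam φ (-(I * ν)))ᵀ).trace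
      = ∑ i, ∑ k, ((I * ν - lam i)⁻¹ * (-(I * ν) - lam k)⁻¹) * (φ i * (φ k)ᵀ).trace := by
  simp only [transferH, transpose_sum, transpose_smul, Matrix.sum_mul, Matrix.mul_sum,
    Matrix.smul_mul, Matrix.mul_smul, trace_sum, trace_smul, smul_eq_mul]
  rw [Finset.sum_comm]
  simp only [Finset.mul_sum]
  exact Finset.sum_congr rfl fun i _ => Finset.sum_congr rfl fun k _ => by ring

lemma integral_trace_transferH_mul_transpose {n n_u n_y : ℕ} {lam : Fin n → ℂ}
    (hstable : ∀ i, (lam i).re < 0) (φ : Fin n → Matrix (Fin n_y) (Fin n_u) ℂ) (ω : ℝ) :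
    ∫ ν : ℝ in (-ω)..ω, (transferH lam φ (I * ν) * (transferH lam φ (-(I * ν)))ᵀ).trace
      = ∑ i, ∑ k, 2 * ((lam i + lam k)⁻¹ * (φ i * (φ k)ᵀ).trace)
          * (catan (ω / lam i) + catan (ω / lam k)) := by
  have hcont : ∀ i k, Continuous fun ν : ℝ =>
      (I * ν - lam i)⁻¹ * (-(I * ν) - lam k)⁻¹ * (φ i * (φ k)ᵀ).trace := fun i k =>
    (continuous_resolvent_mul_resolvent (hstable i) (hstable k)).mul continuous_const
  simp only [trace_transferH_mul_transpose]
  rw [integral_finsetSum fun i _ =>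
    (continuous_finsetSum _ fun k _ => hcont i k).intervalIntegrable _ _]
  refine Finset.sum_congr rfl fun i _ => ?_
  rw [integral_finsetSum fun k _ => (hcont i k).intervalIntegrable _ _]
  refine Finset.sum_congr rfl fun k _ => ?_
  rw [intervalIntegral.integral_mul_const, integral_resolvent_mul_resolvent (hstable i) (hstable k)]
  ring

theorem stmt_1_general (n n_u n_y : ℕ)
    (lam : Fin n → ℂ)
    (φ : Fin n → Matrix (Fin n_y) (Fin n_u) ℂ)
    (hstable : ∀ i, (lam i).re < 0) (ω : ℝ) :
    h2wSq lam φ ω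
      = ∑ i, ∑ k,
          (2 / (Real.pi : ℂ)) * ((lam i + lam k)⁻¹ • (φ i * (φ k)ᵀ)).trace *
            catan ((ω : ℂ) / lam i) := by
  have hsymm : ∀ i k, 2 * ((lam i + lam k)⁻¹ * (φ i * (φ k)ᵀ).trace)
      = 2 * ((lam k + lam i)⁻¹ * (φ k * (φ i)ᵀ).trace) := fun i k => by
    rw [add_comm, trace_mul_transpose_comm]
  rw [h2wSq, integral_trace_transferH_mul_transpose hstable,
    Finset.sum_sum_mul_add_of_symm hsymm, Finset.mul_sum]
  simp only [Finset.mul_sum, trace_smul, smul_eq_mul]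
  refine Finset.sum_congr rfl fun i _ => Finset.sum_congr rfl fun k _ => ?_
  field_simp

theorem stmt_1 (n n_u n_y : ℕ) (hn : 0 < n) (hnu : 0 < n_u) (hny : 0 < n_y)
    (lam : Fin n → ℂ) (hdist : Function.Injective lam)
    (φ : Fin n → Matrix (Fin n_y) (Fin n_u) ℂ)
    (hstable : ∀ i, (lam i).re < 0) (ω : ℝ) (hω : 0 < ω) :
    h2wSq lam φ ω
      = ∑ i, ∑ k,
          (2 / (Real.pi : ℂ)) * ((lam i + lam k)⁻¹ • (φ i * (φ k)ᵀ)).trace *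
            catan ((ω : ℂ) / lam i) :=
  stmt_1_general n n_u n_y lam φ hstable ω
end

section
/- Let z be a complex number with z ≠ i, z ≠ −i and z ≠ 0. If Re(z) = 0 and 0 < Im(z) < 1, then (1/(2i))·log( (z+i)/(z−i) ) = π + (1/(2i))·( log(1 + i/z) − log(1 − i/z) ); otherwise (1/(2i))·log( (z+i)/(z−i) ) = (1/(2i))·( log(1 + i/z) − log(1 − i/z) ). In particular the two formulations of the principal complex arccotangent, acot₂(z) := (1/(2i))·log((z+i)/(z−i)) and acot₁(z) := atan₁(1/z), agree everywhere except on the segment {z : Re(z) = 0, 0 < Im(z) < 1}. -/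
/-!
With `w = I / z` we have `(z + I) / (z - I) = (1 + w) / (1 - w)`, so the question is when
`log ((1 + w) / (1 - w)) = log (1 + w) - log (1 - w)`, i.e. when `arg (1 + w) - arg (1 - w)`
lies in `(-π, π]`. Off the real axis `(1 + w) / (1 - w)` lies in the same open half-plane as `w`,
which pins the difference of arguments to `(0, π)` or `(-π, 0)`. On the real axis it is
`arg (1 + w)` when `w < 1`, and `-π` when `w > 1`, i.e. exactly when `z = I * y` with `0 < y < 1`;
there the principal branch picks up `2πi`, which becomes `π` after division by `2i`.
-/

open Complex
open scoped Real ComplexOrder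

namespace Complex

lemma arg_div_eq_sub_arg_iff {x y : ℂ} (hx : x ≠ 0) (hy : y ≠ 0) :
    (x / y).arg = x.arg - y.arg ↔ x.arg - y.arg ∈ Set.Ioc (-π) π := by
  rw [← arg_coe_angle_toReal_eq_arg, arg_div_coe_angle hx hy, ← Real.Angle.coe_sub,
    Real.Angle.toReal_coe_eq_self_iff_mem_Ioc]

lemma arg_div_eq_sub_arg_add_two_pi_iff {x y : ℂ} (hx : x ≠ 0) (hy : y ≠ 0) :
    (x / y).arg = x.arg - y.arg + 2 * π ↔ x.arg - y.arg ∈ Set.Ioc (-3 * π) (-π) := by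
  rw [← arg_coe_angle_toReal_eq_arg, arg_div_coe_angle hx hy, ← Real.Angle.coe_sub,
    Real.Angle.toReal_coe_eq_self_add_two_pi_iff]

lemma arg_div_eq_sub_arg_sub_two_pi_iff {x y : ℂ} (hx : x ≠ 0) (hy : y ≠ 0) :
    (x / y).arg = x.arg - y.arg - 2 * π ↔ x.arg - y.arg ∈ Set.Ioc π (3 * π) := by
  rw [← arg_coe_angle_toReal_eq_arg, arg_div_coe_angle hx hy, ← Real.Angle.coe_sub,
    Real.Angle.toReal_coe_eq_self_sub_two_pi_iff]

lemma log_div_eq_sub_log_iff {x y : ℂ} (hx : x ≠ 0) (hy : y ≠ 0) :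
    log (x / y) = log x - log y ↔ x.arg - y.arg ∈ Set.Ioc (-π) π := by
  refine Complex.ext_iff.trans <| Iff.trans ?_ <| arg_div_eq_sub_arg_iff hx hy
  simp_rw [sub_re, sub_im, log_re, log_im, norm_div,
    Real.log_div (norm_ne_zero_iff.mpr hx) (norm_ne_zero_iff.mpr hy), true_and]

lemma log_div_eq_sub_log_add_two_pi_mul_I_iff {x y : ℂ} (hx : x ≠ 0) (hy : y ≠ 0) :
    log (x / y) = log x - log y + 2 * π * I ↔ x.arg - y.arg ∈ Set.Ioc (-3 * π) (-π) := by
  refine Complex.ext_iff.trans <| Iff.trans ?_ <| arg_div_eq_sub_arg_add_two_pi_iff hx hy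
  simp [log_re, log_im,
    Real.log_div (norm_ne_zero_iff.mpr hx) (norm_ne_zero_iff.mpr hy)]

lemma im_one_add_div_one_sub (w : ℂ) :
    ((1 + w) / (1 - w)).im = 2 * w.im / normSq (1 - w) := by
  simp only [div_im, add_re, add_im, sub_re, sub_im, one_re, one_im]
  ring

/-- The difference is congruent to `arg ((1 + w) / (1 - w)) ∈ (0, π)` modulo `2π` and lies in
`(0, 2π)`. -/
lemma arg_one_add_sub_arg_one_sub_mem_Ioo_of_im_pos {w : ℂ} (hw : 0 < w.im) :
    arg (1 + w) - arg (1 - w) ∈ Set.Ioo 0 π := by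
  have hx : 1 + w ≠ 0 := ne_of_apply_ne im (by simpa using hw.ne')
  have hy : 1 - w ≠ 0 := ne_of_apply_ne im (by simpa using hw.ne')
  have hx_arg : 0 ≤ arg (1 + w) := arg_nonneg_iff.mpr (by simpa using hw.le)
  have hy_arg : arg (1 - w) < 0 := arg_neg_iff.mpr (by simpa using hw)
  have hq_im : 0 < ((1 + w) / (1 - w)).im := by
    have := normSq_pos.mpr hy
    rw [im_one_add_div_one_sub]
    positivity
  have hq_nonneg : 0 ≤ arg ((1 + w) / (1 - w)) := arg_nonneg_iff.mpr hq_im.le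
  have hq_lt : arg ((1 + w) / (1 - w)) < π := arg_lt_pi_iff.mpr (Or.inr hq_im.ne')
  have hx_le := arg_le_pi (1 + w)
  have hy_gt := neg_pi_lt_arg (1 - w)
  rcases le_or_gt (arg (1 + w) - arg (1 - w)) π with hd | hd
  · have := (arg_div_eq_sub_arg_iff hx hy).mpr ⟨by linarith, hd⟩
    exact ⟨by linarith, by linarith⟩
  · have := (arg_div_eq_sub_arg_sub_two_pi_iff hx hy).mpr ⟨hd, by linarith⟩
    linarith

lemma log_one_add_div_one_sub_of_one_lt {w : ℂ} (hw : 1 < w) :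
    log ((1 + w) / (1 - w)) = log (1 + w) - log (1 - w) + 2 * π * I := by
  obtain ⟨hw_re, hw_im⟩ := lt_def.mp hw
  simp only [one_re, one_im] at hw_re hw_im
  have hx : arg (1 + w) = 0 := arg_eq_zero_iff.mpr ⟨by simp; linarith, by simp [← hw_im]⟩
  have hy : arg (1 - w) = π := arg_eq_pi_iff.mpr ⟨by simp; linarith, by simp [← hw_im]⟩
  refine (log_div_eq_sub_log_add_two_pi_mul_I_iff ?_ ?_).mpr ?_
  · exact ne_of_apply_ne re (by simp; linarith)
  · exact ne_of_apply_ne re (by simp; linarith)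
  · rw [hx, hy]
    constructor <;> linarith [Real.pi_pos]

lemma log_one_add_div_one_sub {w : ℂ} (hw : ¬ 1 ≤ w) (hw' : w ≠ -1) :
    log ((1 + w) / (1 - w)) = log (1 + w) - log (1 - w) := by
  have hx : 1 + w ≠ 0 := fun h => hw' (by linear_combination h)
  have hy : 1 - w ≠ 0 := fun h => hw (by rw [sub_eq_zero.mp h])
  rw [log_div_eq_sub_log_iff hx hy]
  rcases lt_trichotomy w.im 0 with him | him | him
  · have h := arg_one_add_sub_arg_one_sub_mem_Ioo_of_im_pos (w := -w) (by simpa using him)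
    rw [← sub_eq_add_neg, sub_neg_eq_add] at h
    constructor <;> linarith [h.1, h.2]
  · have hre : w.re < 1 := by
      by_contra! h
      exact hw (le_def.mpr ⟨by simpa using h, by simp [him]⟩)
    rw [arg_eq_zero_iff (z := 1 - w) |>.mpr ⟨by simp; linarith, by simp [him]⟩, sub_zero]
    exact arg_mem_Ioc _
  · have h := arg_one_add_sub_arg_one_sub_mem_Ioo_of_im_pos him
    constructor <;> linarith [h.1, h.2]

lemma one_lt_I_div_iff (z : ℂ) : 1 < I / z ↔ z.re = 0 ∧ 0 < z.im ∧ z.im < 1 := by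
  rw [lt_def]
  simp only [div_re, div_im, I_re, I_im, one_re, one_im, zero_mul, one_mul, zero_div, zero_add,
    sub_zero, eq_comm (a := (0 : ℝ)), div_eq_zero_iff]
  constructor
  · rintro ⟨hlt, hre | hsq⟩
    · rw [normSq_apply, hre, mul_zero, zero_add, div_self_mul_self', one_lt_inv_iff₀] at hlt
      exact ⟨hre, hlt⟩
    · rw [hsq, div_zero] at hlt
      linarith
  · rintro ⟨hre, him⟩
    rw [normSq_apply, hre, mul_zero, zero_add, div_self_mul_self', one_lt_inv_iff₀]
    exact ⟨him, Or.inl rfl⟩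

lemma add_I_div_sub_I {z : ℂ} (hz : z ≠ 0) : (z + I) / (z - I) = (1 + I / z) / (1 - I / z) := by
  rw [← mul_div_mul_left (1 + I / z) _ hz, mul_add, mul_sub, mul_one, mul_div_cancel₀ _ hz]

end Complex

theorem stmt_12 (z : ℂ) (hz0 : z ≠ 0) (hzi : z ≠ Complex.I) (hzmi : z ≠ -Complex.I) :
    ((z.re = 0 ∧ 0 < z.im ∧ z.im < 1) →
      (2 * Complex.I)⁻¹ * Complex.log ((z + Complex.I) / (z - Complex.I))
        = (Real.pi : ℂ) + (2 * Complex.I)⁻¹ *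
            (Complex.log (1 + Complex.I / z) - Complex.log (1 - Complex.I / z)))
    ∧ (¬ (z.re = 0 ∧ 0 < z.im ∧ z.im < 1) →
      (2 * Complex.I)⁻¹ * Complex.log ((z + Complex.I) / (z - Complex.I))
        = (2 * Complex.I)⁻¹ *
            (Complex.log (1 + Complex.I / z) - Complex.log (1 - Complex.I / z))) := by
  rw [add_I_div_sub_I hz0, ← one_lt_I_div_iff]
  refine ⟨fun h => ?_, fun h => ?_⟩
  · rw [log_one_add_div_one_sub_of_one_lt h]
    field_simp
    ring
  · have hw_ne_one : I / z ≠ 1 := fun h' => hzi ((div_eq_one_iff_eq hz0).mp h').symm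
    have hw_ne_neg_one : I / z ≠ -1 := fun h' => hzmi (by
      rw [div_eq_iff hz0] at h'
      linear_combination h')
    rw [log_one_add_div_one_sub (fun hle => h (hle.lt_of_ne hw_ne_one.symm)) hw_ne_neg_one]
end
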